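/- arXiv:1807.02066 — 2 statements merged into one kernel-verified Lean document; each statement's English description precedes it below -/
import Mathlib

section
/- Let $1 < p, q < \infty$ with $1/p + 1/q = 1$. If $u \in U^p$ and $\phi : \mathbb{R} \to L^2(\mathbb{R}^n)$ with $\partial_t \phi \in L^1_t L^2_x$, then $|\int_{\mathbb{R}} \langle \partial_t \phi(t), u(t) \rangle_{L^2} \, dt| \leq |\phi|_{V^q} \|u\|_{U^p}$. -/
open MeasureTheory ENNReal Filter

noncomputable section

/-- The space `L²(ℝⁿ; ℂ)`. -/
abbrev Hsp (n : ℕ) : Type :=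
  MeasureTheory.Lp ℂ 2 (volume : Measure (EuclideanSpace ℝ (Fin n)))

namespace DP

variable {n : ℕ}

/-- The homogeneous `p`-variation seminorm of `v : ℝ → L²(ℝⁿ)`, as a supremum over all
finite increasing sequences (partitions). -/
def pVar (p : ℝ) (v : ℝ → Hsp n) : ℝ≥0∞ :=
  ⨆ (N : ℕ) (t : Fin (N + 1) → ℝ) (_ : StrictMono t),
    (∑ j : Fin N, (‖v (t j.succ) - v (t j.castSucc)‖₊ : ℝ≥0∞) ^ p) ^ (1 / p)

/-- The `L^∞_t L^2_x` norm of `v : ℝ → L²(ℝⁿ)`. -/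
def supNorm (v : ℝ → Hsp n) : ℝ≥0∞ := ⨆ t : ℝ, (‖v t‖₊ : ℝ≥0∞)

/-- The `V^p` norm `‖v‖_{V^p} = ‖v‖_{L^∞_t L^2_x} + |v|_{V^p}`. -/
def VpNorm (p : ℝ) (v : ℝ → Hsp n) : ℝ≥0∞ := supNorm v + pVar p v

/-- The step function with partition points `t 0 < t 1 < ... < t N`, taking the value
`f j` on `[t j, t (j+1))` and `f N` on `[t N, ∞)` (and `0` on `(-∞, t 0)`). -/
def stepFun (N : ℕ) (t : Fin (N + 1) → ℝ) (f : Fin (N + 1) → Hsp n) : ℝ → Hsp n := fun s =>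
  (∑ j : Fin N,
      Set.indicator (Set.Ico (t j.castSucc) (t j.succ)) (fun _ => f j.castSucc) s)
    + Set.indicator (Set.Ici (t (Fin.last N))) (fun _ => f (Fin.last N)) s

/-- A `U^p` atom: a step function whose values are `ℓ^p`-normalised in `L²`. -/
def IsUpAtom (p : ℝ) (u : ℝ → Hsp n) : Prop :=
  ∃ (N : ℕ) (t : Fin (N + 1) → ℝ) (f : Fin (N + 1) → Hsp n),
    StrictMono t ∧ u = stepFun N t f ∧ (∑ j, ‖f j‖ ^ p) ^ (1 / p) = 1

/-- The atomic `U^p` norm: the infimum of `∑ |c j|` over all representations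
`u = ∑ c j • (a j)` as an absolutely convergent sum of `U^p` atoms. -/
def UpNorm (p : ℝ) (u : ℝ → Hsp n) : ℝ≥0∞ :=
  ⨅ (c : ℕ → ℝ) (a : ℕ → ℝ → Hsp n) (_ : ∀ j, IsUpAtom p (a j))
    (_ : Summable fun j => |c j|)
    (_ : ∀ s : ℝ, HasSum (fun j => c j • a j s) (u s)),
    ENNReal.ofReal (∑' j, |c j|)

end DP

/-!
On an atom `a = ∑ⱼ 𝟙_{[tⱼ, tⱼ₊₁)} fⱼ` the fundamental theorem of calculus turns `∫ ⟪φ', a⟫` into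
`∑ⱼ ⟪φ tⱼ₊₁ - φ tⱼ, fⱼ⟫`, the last, unbounded interval being the limit of bounded ones. Hölder's
inequality bounds each such sum by `|φ|_{V^q} ‖(fⱼ)‖_{ℓ^p} = |φ|_{V^q}`. Dominated convergence
carries this bound through an atomic decomposition `u = ∑ⱼ cⱼ aⱼ`, giving `|φ|_{V^q} ∑ⱼ |cⱼ|`, and
the infimum over decompositions gives `|φ|_{V^q} ‖u‖_{U^p}`. Atoms are also bounded by the finite
`‖φ'‖_{L¹}`; using the smaller of the two bounds keeps the infimum step valid when `|φ|_{V^q} = ∞`.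
-/

open Set Filter Topology
open scoped InnerProductSpace

theorem integral_inner_const {α 𝕜 E : Type*} [MeasurableSpace α] {μ : Measure α} [RCLike 𝕜]
    [NormedAddCommGroup E] [InnerProductSpace 𝕜 E] [CompleteSpace E] [NormedSpace ℝ E]
    {f : α → E} (hf : Integrable f μ) (c : E) :
    ∫ x, ⟪f x, c⟫_𝕜 ∂μ = ⟪∫ x, f x ∂μ, c⟫_𝕜 := by
  simp_rw [← inner_conj_symm _ c]
  rw [integral_conj, integral_inner hf]

section FundamentalTheorem

variable {E : Type*} [NormedAddCommGroup E] [NormedSpace ℝ E] [CompleteSpace E]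
  {φ φ' : ℝ → E}

theorem integral_Ico_eq_sub_of_hasDerivAt (hderiv : ∀ t, HasDerivAt φ (φ' t) t)
    (hint : Integrable φ') {a b : ℝ} (hab : a ≤ b) :
    ∫ s in Ico a b, φ' s = φ b - φ a := by
  rw [integral_Ico_eq_integral_Ioo, ← integral_Ioc_eq_integral_Ioo,
    ← intervalIntegral.integral_of_le hab,
    intervalIntegral.integral_eq_sub_of_hasDerivAt (fun s _ => hderiv s) hint.intervalIntegrable]

theorem tendsto_sub_atTop_integral_Ioi (hderiv : ∀ t, HasDerivAt φ (φ' t) t)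
    (hint : Integrable φ') (a : ℝ) :
    Tendsto (fun T => φ T - φ a) atTop (𝓝 (∫ s in Ioi a, φ' s)) := by
  have hFTC : ∀ T, ∫ s in a..T, φ' s = φ T - φ a := fun T =>
    intervalIntegral.integral_eq_sub_of_hasDerivAt (fun s _ => hderiv s) hint.intervalIntegrable
  simpa only [id, hFTC] using intervalIntegral_tendsto_integral_Ioi a hint.integrableOn tendsto_id

end FundamentalTheorem

theorem Fin.strictMono_snoc {α : Type*} [Preorder α] {N : ℕ} {t : Fin (N + 1) → α}
    (ht : StrictMono t) {T : α} (hT : t (Fin.last N) < T) :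
    StrictMono (Fin.snoc t T : Fin (N + 2) → α) := by
  rw [Fin.strictMono_iff_lt_succ]
  intro i
  induction i using Fin.lastCases with
  | last => simpa using hT
  | cast j =>
    simp only [Fin.succ_castSucc, Fin.snoc_castSucc]
    exact ht Fin.castSucc_lt_succ

theorem rpow_sum_enorm_rpow_eq_ofReal {ι E : Type*} [Fintype ι] [SeminormedAddCommGroup E]
    {p : ℝ} (hp : 0 < p) (f : ι → E) :
    (∑ j, ‖f j‖ₑ ^ p) ^ (1 / p) = ENNReal.ofReal ((∑ j, ‖f j‖ ^ p) ^ (1 / p)) := by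
  simp_rw [← ofReal_norm, ENNReal.ofReal_rpow_of_nonneg (norm_nonneg _) hp.le]
  rw [← ENNReal.ofReal_sum_of_nonneg fun _ _ => by positivity,
    ENNReal.ofReal_rpow_of_nonneg (by positivity) (by positivity)]

theorem norm_le_one_of_rpow_sum_eq_one {ι : Type*} [Fintype ι] {p : ℝ} (hp : 0 < p)
    {x : ι → ℝ} (hx : ∀ j, 0 ≤ x j) (h : (∑ j, x j ^ p) ^ (1 / p) = 1) (j : ι) : x j ≤ 1 := by
  calc x j
    _ = (x j ^ p) ^ (1 / p) := by
      rw [← Real.rpow_mul (hx j), mul_one_div_cancel hp.ne', Real.rpow_one]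
    _ ≤ (∑ j, x j ^ p) ^ (1 / p) :=
      Real.rpow_le_rpow (Real.rpow_nonneg (hx j) p)
        (Finset.single_le_sum (fun k _ => Real.rpow_nonneg (hx k) p) (Finset.mem_univ j))
        (by positivity)
    _ = 1 := h

namespace DP

variable {n : ℕ}

theorem stronglyMeasurable_stepFun (N : ℕ) (t : Fin (N + 1) → ℝ) (f : Fin (N + 1) → Hsp n) :
    StronglyMeasurable (stepFun N t f) :=
  (Finset.stronglyMeasurable_fun_sum _ fun _ _ =>
      stronglyMeasurable_const.indicator measurableSet_Ico).add
    (stronglyMeasurable_const.indicator measurableSet_Ici)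

theorem norm_stepFun_le {N : ℕ} {t : Fin (N + 1) → ℝ} (ht : Monotone t)
    {f : Fin (N + 1) → Hsp n} {C : ℝ} (hf : ∀ j, ‖f j‖ ≤ C) (s : ℝ) :
    ‖stepFun N t f s‖ ≤ C := by
  have hC : 0 ≤ C := (norm_nonneg _).trans (hf 0)
  by_cases hs : ∃ j : Fin N, s ∈ Ico (t j.castSucc) (t j.succ)
  · obtain ⟨j, hj⟩ := hs
    have hk : ∀ k ≠ j, s ∉ Ico (t k.castSucc) (t k.succ) := by
      intro k hkj hk
      rcases hkj.lt_or_gt with h | h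
      · exact (hk.2.trans_le ((ht (Fin.succ_le_castSucc_iff.2 h)).trans hj.1)).false
      · exact (hj.2.trans_le ((ht (Fin.succ_le_castSucc_iff.2 h)).trans hk.1)).false
    have hlast : s ∉ Ici (t (Fin.last N)) := fun h =>
      (hj.2.trans_le ((ht (Fin.le_last _)).trans h)).false
    rw [stepFun, Finset.sum_eq_single j (fun k _ hkj => indicator_of_notMem (hk k hkj) _)
      (by simp), indicator_of_mem hj, indicator_of_notMem hlast, add_zero]
    exact hf _
  · simp only [not_exists] at hs
    rw [stepFun, Finset.sum_eq_zero fun k _ => indicator_of_notMem (hs k) _, zero_add]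
    by_cases hlast : s ∈ Ici (t (Fin.last N))
    · rw [indicator_of_mem hlast]; exact hf _
    · rw [indicator_of_notMem hlast, norm_zero]; exact hC

theorem IsUpAtom.norm_le_one {p : ℝ} (hp : 0 < p) {a : ℝ → Hsp n} (ha : IsUpAtom p a) (s : ℝ) :
    ‖a s‖ ≤ 1 := by
  obtain ⟨N, t, f, ht, rfl, hf⟩ := ha
  exact norm_stepFun_le ht.monotone
    (norm_le_one_of_rpow_sum_eq_one hp (fun j => norm_nonneg (f j)) hf) s

theorem IsUpAtom.aestronglyMeasurable {p : ℝ} {a : ℝ → Hsp n} (ha : IsUpAtom p a)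
    {μ : Measure ℝ} : AEStronglyMeasurable a μ := by
  obtain ⟨N, t, f, -, rfl, -⟩ := ha
  exact (stronglyMeasurable_stepFun N t f).aestronglyMeasurable

theorem enorm_sum_inner_sub_le_pVar {p q : ℝ} (hpq : p.HolderConjugate q) (φ : ℝ → Hsp n)
    {N : ℕ} {t : Fin (N + 1) → ℝ} (ht : StrictMono t) (f : Fin N → Hsp n) :
    ‖∑ j, ⟪φ (t j.succ) - φ (t j.castSucc), f j⟫_ℂ‖ₑ ≤
      pVar q φ * (∑ j, ‖f j‖ₑ ^ p) ^ (1 / p) := by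
  calc ‖∑ j, ⟪φ (t j.succ) - φ (t j.castSucc), f j⟫_ℂ‖ₑ
    _ ≤ ∑ j, ‖φ (t j.succ) - φ (t j.castSucc)‖ₑ * ‖f j‖ₑ := by
      refine (enorm_sum_le _ _).trans (Finset.sum_le_sum fun j _ => ?_)
      simpa only [enorm_eq_nnnorm, ← ENNReal.coe_mul, ENNReal.coe_le_coe]
        using nnnorm_inner_le_nnnorm (𝕜 := ℂ) _ _
    _ ≤ (∑ j : Fin N, ‖φ (t j.succ) - φ (t j.castSucc)‖ₑ ^ q) ^ (1 / q) *
          (∑ j, ‖f j‖ₑ ^ p) ^ (1 / p) :=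
      ENNReal.inner_le_Lp_mul_Lq Finset.univ
        (fun (j : Fin N) => ‖φ (t j.succ) - φ (t j.castSucc)‖ₑ) (fun j => ‖f j‖ₑ) hpq.symm
    _ ≤ pVar q φ * (∑ j, ‖f j‖ₑ ^ p) ^ (1 / p) :=
      mul_le_mul_left (by exact le_iSup₂_of_le N t (le_iSup_of_le ht le_rfl)) _

section Derivative

variable {φ φ' : ℝ → Hsp n}

theorem inner_stepFun_eq {N : ℕ} (t : Fin (N + 1) → ℝ) (f : Fin (N + 1) → Hsp n)
    (g : ℝ → Hsp n) (s : ℝ) :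
    ⟪g s, stepFun N t f s⟫_ℂ = ∑ j : Fin N, (Ico (t j.castSucc) (t j.succ)).indicator
        (fun s => ⟪g s, f j.castSucc⟫_ℂ) s + (Ici (t (Fin.last N))).indicator
        (fun s => ⟪g s, f (Fin.last N)⟫_ℂ) s := by
  simp only [stepFun, inner_add_right, inner_sum, indicator_apply]
  congr 1
  · exact Finset.sum_congr rfl fun j _ => by split_ifs <;> simp
  · split_ifs <;> simp

theorem integral_inner_stepFun (hderiv : ∀ t, HasDerivAt φ (φ' t) t) (hint : Integrable φ')
    {N : ℕ} {t : Fin (N + 1) → ℝ} (ht : Monotone t) (f : Fin (N + 1) → Hsp n) :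
    ∫ s, ⟪φ' s, stepFun N t f s⟫_ℂ =
      ∑ j : Fin N, ⟪φ (t j.succ) - φ (t j.castSucc), f j.castSucc⟫_ℂ
        + ⟪∫ s in Ioi (t (Fin.last N)), φ' s, f (Fin.last N)⟫_ℂ := by
  have hpiece : ∀ (S : Set ℝ) (x : Hsp n), MeasurableSet S →
      ∫ s, S.indicator (fun s => ⟪φ' s, x⟫_ℂ) s = ⟪∫ s in S, φ' s, x⟫_ℂ := fun S x hS => by
    rw [integral_indicator hS, integral_inner_const hint.integrableOn]
  have hint' : ∀ (S : Set ℝ) (x : Hsp n), MeasurableSet S →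
      Integrable (S.indicator (fun s => ⟪φ' s, x⟫_ℂ)) := fun S x hS =>
    (hint.inner_const x).indicator hS
  simp_rw [inner_stepFun_eq t f φ']
  rw [integral_add (integrable_finsetSum _ fun j _ => hint' _ _ measurableSet_Ico)
      (hint' _ _ measurableSet_Ici), integral_finsetSum _ fun j _ => hint' _ _ measurableSet_Ico,
    hpiece _ _ measurableSet_Ici, integral_Ici_eq_integral_Ioi]
  congr 1
  refine Finset.sum_congr rfl fun j _ => ?_
  rw [hpiece _ _ measurableSet_Ico,
    integral_Ico_eq_sub_of_hasDerivAt hderiv hint (ht Fin.castSucc_lt_succ.le)]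

theorem IsUpAtom.enorm_integral_inner_le_pVar (hderiv : ∀ t, HasDerivAt φ (φ' t) t)
    (hint : Integrable φ') {p q : ℝ} (hpq : p.HolderConjugate q) {a : ℝ → Hsp n}
    (ha : IsUpAtom p a) : ‖∫ s, ⟪φ' s, a s⟫_ℂ‖ₑ ≤ pVar q φ := by
  obtain ⟨N, t, f, ht, rfl, hf⟩ := ha
  rw [integral_inner_stepFun hderiv hint ht.monotone]
  set S := ∑ j : Fin N, ⟪φ (t j.succ) - φ (t j.castSucc), f j.castSucc⟫_ℂ
  have hlim : Tendsto (fun T => S + ⟪φ T - φ (t (Fin.last N)), f (Fin.last N)⟫_ℂ) atTop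
      (𝓝 (S + ⟪∫ s in Ioi (t (Fin.last N)), φ' s, f (Fin.last N)⟫_ℂ)) :=
    tendsto_const_nhds.add
      ((tendsto_sub_atTop_integral_Ioi hderiv hint _).inner tendsto_const_nhds)
  refine le_of_tendsto hlim.enorm ((eventually_gt_atTop (t (Fin.last N))).mono fun T hT => ?_)
  let t' : Fin (N + 2) → ℝ := Fin.snoc t T
  have hsnoc : S + ⟪φ T - φ (t (Fin.last N)), f (Fin.last N)⟫_ℂ =
      ∑ k, ⟪φ (t' k.succ) - φ (t' k.castSucc), f k⟫_ℂ := by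
    simp only [Fin.sum_univ_castSucc, S, t', Fin.succ_castSucc, Fin.snoc_castSucc, Fin.succ_last,
      Fin.snoc_last]
  rw [hsnoc]
  calc _ ≤ pVar q φ * (∑ k, ‖f k‖ₑ ^ p) ^ (1 / p) :=
        enorm_sum_inner_sub_le_pVar hpq φ (Fin.strictMono_snoc ht hT) f
    _ = pVar q φ := by rw [rpow_sum_enorm_rpow_eq_ofReal hpq.pos, hf, ENNReal.ofReal_one, mul_one]

end Derivative

theorem IsUpAtom.enorm_integral_inner_le_lintegral {p : ℝ} (hp : 0 < p) {a : ℝ → Hsp n}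
    (ha : IsUpAtom p a) (g : ℝ → Hsp n) : ‖∫ s, ⟪g s, a s⟫_ℂ‖ₑ ≤ ∫⁻ s, ‖g s‖ₑ := by
  refine (enorm_integral_le_lintegral_enorm _).trans (lintegral_mono fun s => ?_)
  rw [enorm_le_iff_norm_le]
  exact (norm_inner_le_norm _ _).trans
    (mul_le_of_le_one_right (norm_nonneg _) (ha.norm_le_one hp s))

theorem enorm_integral_inner_le_of_hasSum {p : ℝ} (hp : 0 < p) {g : ℝ → Hsp n}
    (hg : Integrable g) {u : ℝ → Hsp n} {c : ℕ → ℝ} {a : ℕ → ℝ → Hsp n}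
    (ha : ∀ j, IsUpAtom p (a j)) (hc : Summable fun j => |c j|)
    (hu : ∀ s, HasSum (fun j => c j • a j s) (u s)) {M : ℝ≥0∞}
    (hM : ∀ j, ‖∫ s, ⟪g s, a j s⟫_ℂ‖ₑ ≤ M) :
    ‖∫ s, ⟪g s, u s⟫_ℂ‖ₑ ≤ M * ENNReal.ofReal (∑' j, |c j|) := by
  have hsum : HasSum (fun j => c j • ∫ s, ⟪g s, a j s⟫_ℂ) (∫ s, ⟪g s, u s⟫_ℂ) := by
    simp_rw [← integral_smul]
    refine hasSum_integral_of_dominated_convergence (fun j s => |c j| * ‖g s‖)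
      (fun j => (hg.aestronglyMeasurable.inner (ha j).aestronglyMeasurable).const_smul (c j))
      (fun j => ae_of_all _ fun s => ?_) (ae_of_all _ fun s => hc.mul_right _) ?_
      (ae_of_all _ fun s => ?_)
    · rw [norm_smul, Real.norm_eq_abs]
      exact mul_le_mul_of_nonneg_left ((norm_inner_le_norm _ _).trans
        (mul_le_of_le_one_right (norm_nonneg _) ((ha j).norm_le_one hp s))) (abs_nonneg _)
    · simp_rw [tsum_mul_right]
      exact hg.norm.const_mul _
    · simpa only [innerSL_apply_apply, ContinuousLinearMap.map_smul_of_tower]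
        using (hu s).mapL (innerSL ℂ (g s))
  have hbound : HasSum (fun j => ENNReal.ofReal |c j| * M) (ENNReal.ofReal (∑' j, |c j|) * M) := by
    rw [ENNReal.ofReal_tsum_of_nonneg (fun j => abs_nonneg _) hc, ← ENNReal.tsum_mul_right]
    exact ENNReal.summable.hasSum
  rw [mul_comm]
  refine hsum.enorm_le_of_bounded hbound fun j => ?_
  rw [enorm_smul, Real.enorm_eq_ofReal_abs]
  exact mul_le_mul_right (hM j) _

theorem le_mul_upNorm {p : ℝ} {u : ℝ → Hsp n} (hu : UpNorm p u ≠ ⊤) {X M : ℝ≥0∞} (hM : M ≠ ⊤)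
    (h : ∀ (c : ℕ → ℝ) (a : ℕ → ℝ → Hsp n), (∀ j, IsUpAtom p (a j)) →
      Summable (fun j => |c j|) → (∀ s, HasSum (fun j => c j • a j s) (u s)) →
      X ≤ M * ENNReal.ofReal (∑' j, |c j|)) :
    X ≤ M * UpNorm p u := by
  rcases eq_or_ne M 0 with rfl | hM0
  · obtain ⟨c, a, ha, hc, hrep, -⟩ : ∃ (c : ℕ → ℝ) (a : ℕ → ℝ → Hsp n), (∀ j, IsUpAtom p (a j)) ∧
        Summable (fun j => |c j|) ∧ (∀ s, HasSum (fun j => c j • a j s) (u s)) ∧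
        ENNReal.ofReal (∑' j, |c j|) < ⊤ := by
      simpa only [UpNorm, iInf_lt_iff, exists_prop] using hu.lt_top
    simpa using h c a ha hc hrep
  · simp only [UpNorm, ENNReal.mul_iInf_of_ne hM0 hM, le_iInf_iff]
    exact h

end DP

theorem stmt4_general (n : ℕ) (p q : ℝ) (hp : 1 < p) (hpq : 1 / p + 1 / q = 1)
    (u : ℝ → Hsp n) (hu : DP.UpNorm p u ≠ ⊤)
    (φ φ' : ℝ → Hsp n) (hderiv : ∀ t : ℝ, HasDerivAt φ (φ' t) t)
    (hint : Integrable φ' (volume : Measure ℝ)) :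
    (‖∫ t : ℝ, (inner ℂ (φ' t) (u t) : ℂ)‖₊ : ℝ≥0∞) ≤ DP.pVar q φ * DP.UpNorm p u := by
  have hpq' : p.HolderConjugate q :=
    Real.holderConjugate_iff.2 ⟨hp, by simpa only [one_div] using hpq⟩
  set M := min (DP.pVar q φ) (∫⁻ s, ‖φ' s‖ₑ)
  have hM : M ≠ ⊤ := ne_top_of_le_ne_top hint.2.ne (min_le_right _ _)
  have hatom : ∀ a, DP.IsUpAtom p a → ‖∫ s, ⟪φ' s, a s⟫_ℂ‖ₑ ≤ M := fun a ha =>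
    le_min (ha.enorm_integral_inner_le_pVar hderiv hint hpq')
      (ha.enorm_integral_inner_le_lintegral hpq'.pos φ')
  calc (‖∫ t : ℝ, (inner ℂ (φ' t) (u t) : ℂ)‖₊ : ℝ≥0∞)
    _ ≤ M * DP.UpNorm p u := DP.le_mul_upNorm hu hM fun c a ha hc hrep =>
      DP.enorm_integral_inner_le_of_hasSum hpq'.pos hint ha hc hrep fun j => hatom _ (ha j)
    _ ≤ DP.pVar q φ * DP.UpNorm p u := mul_le_mul_left (min_le_left _ _) _

/-- (Dual pairing bound.) Let `1 < p, q < ∞` with `1/p + 1/q = 1`. If `u ∈ U^p`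
and `φ : ℝ → L²(ℝⁿ)` has derivative `∂ₜφ ∈ L¹ₜL²ₓ`, then
`|∫ ⟨∂ₜφ(t), u(t)⟩ dt| ≤ |φ|_{V^q} ‖u‖_{U^p}`. -/
theorem stmt4 (n : ℕ) (p q : ℝ) (hp : 1 < p) (hq : 1 < q) (hpq : 1 / p + 1 / q = 1)
    (u : ℝ → Hsp n) (hu : DP.UpNorm p u ≠ ⊤)
    (φ φ' : ℝ → Hsp n) (hderiv : ∀ t : ℝ, HasDerivAt φ (φ' t) t)
    (hint : Integrable φ' (volume : Measure ℝ)) :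
    (‖∫ t : ℝ, (inner ℂ (φ' t) (u t) : ℂ)‖₊ : ℝ≥0∞) ≤ DP.pVar q φ * DP.UpNorm p u :=
  stmt4_general n p q hp hpq u hu φ φ' hderiv hint
end
end

section
/- Let $1 < p < \infty$ and $\tau = (t_j)_{j=1}^N$ be a finite increasing sequence. Let $u \in L^\infty_t L^2_x$ be right continuous with $u(t) \to 0$ in $L^2$ as $t \to -\infty$, and define the step function $u_\tau = \sum_{j=1}^N \mathbb{1}_{[t_j, t_{j+1})} u(t_j)$ (with $t_{N+1} = \infty$). Then, with $t_0 = -\infty$, $\|u - u_\tau\|_{\widetilde{U}^p_{dis}} \leq 4 (\sum_{j=0}^N \|u\|_{\widetilde{U}^p_{dis}(t_j, t_{j+1})}^p)^{1/p}$. -/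
open MeasureTheory ENNReal Filter

noncomputable section

namespace DP

/-- The discrete dual pairing `B(w, u)` associated with the partition points `t 0 < ... < t N`:
`B(w,u) = ⟨w(t₀), u(t₀)⟩ + ∑_{j≥1} ⟨w(t_j) - w(t_{j-1}), u(t_j)⟩`. -/
def Bpair {n : ℕ} (N : ℕ) (t : Fin (N + 1) → ℝ) (w u : ℝ → Hsp n) : ℂ :=
  (inner ℂ (w (t 0)) (u (t 0)) : ℂ) +
    ∑ j : Fin N, (inner ℂ (w (t j.succ) - w (t j.castSucc)) (u (t j.succ)) : ℂ)

/-- The discrete weak `U^p` norm `‖u‖_{Ũ^p_{dis}}`: the supremum of `|B(w,u)|` over all step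
functions `w` with `|w|_{V^q} ≤ 1`. -/
def UdisNorm {n : ℕ} (q : ℝ) (u : ℝ → Hsp n) : ℝ≥0∞ :=
  ⨆ (N : ℕ) (t : Fin (N + 1) → ℝ) (_ : StrictMono t) (f : Fin (N + 1) → Hsp n)
    (_ : pVar q (stepFun N t f) ≤ 1),
    (‖Bpair N t (stepFun N t f) u‖₊ : ℝ≥0∞)

/-- The localised discrete weak `U^p` norm `‖u‖_{Ũ^p_{dis}(a,b)}`, the supremum being restricted
to compactly supported step functions supported in the interval `(a, b) ⊆ [-∞, ∞]`. -/
def UdisNormLoc {n : ℕ} (q : ℝ) (a b : EReal) (u : ℝ → Hsp n) : ℝ≥0∞ :=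
  ⨆ (N : ℕ) (t : Fin (N + 1) → ℝ) (_ : StrictMono t) (f : Fin (N + 1) → Hsp n)
    (_ : ∀ s : ℝ, ¬(a < (s : EReal) ∧ (s : EReal) < b) → stepFun N t f s = 0)
    (_ : pVar q (stepFun N t f) ≤ 1),
    (‖Bpair N t (stepFun N t f) u‖₊ : ℝ≥0∞)

end DP

/-!
Test `u - u_τ` against a step function `w` with `|w|_{V^q} ≤ 1`. The discrete pairing splits
over the gaps `(t_{i-1}, t_i)` of `τ`: points of `τ` contribute nothing, as `u - u_τ` vanishes
there, and on the `i`-th gap `u - u_τ = u - u(t_{i-1})`. Pick `ℓ` just right of `t_{i-1}` with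
`u(ℓ) ≈ u(t_{i-1})` (right continuity; `u(ℓ) ≈ 0` far left for the first gap). Up to a small
error, the part of the pairing in the gap is `B(z_i, u)`, where `z_i` freezes `w` at the points of
the gap, starts at `ℓ` and vanishes from the last of them on; so `z_i` is supported in the gap and
`|z_i|_{V^q}^q ≤ 2 V_i`, with `V_i` the `q`-th power of the `q`-variation of `w` on an interval
ending in the gap. These intervals are ordered, hence `∑ V_i ≤ |w|_{V^q}^q ≤ 1`, and Hölder's
inequality gives the bound with the constant `2^{1/q} ≤ 4`.
-/

namespace DP

section Variation

variable {E : Type*} [NormedAddCommGroup E] (q : ℝ) (W : ℝ → E)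

def incrSum : List ℝ → ℝ≥0∞
  | x :: y :: l => ‖W y - W x‖ₑ ^ q + incrSum (y :: l)
  | _ => 0

@[simp] lemma incrSum_nil : incrSum q W [] = 0 := rfl

@[simp] lemma incrSum_singleton (x : ℝ) : incrSum q W [x] = 0 := rfl

lemma incrSum_cons_cons (x y : ℝ) (l : List ℝ) :
    incrSum q W (x :: y :: l) = ‖W y - W x‖ₑ ^ q + incrSum q W (y :: l) := rfl

lemma incrSum_pair (x y : ℝ) : incrSum q W [x, y] = ‖W y - W x‖ₑ ^ q := by
  simp [incrSum_cons_cons]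

lemma incrSum_ofFn {N : ℕ} (σ : Fin (N + 1) → ℝ) :
    incrSum q W (List.ofFn σ) = ∑ j : Fin N, ‖W (σ j.succ) - W (σ j.castSucc)‖ₑ ^ q := by
  induction N with
  | zero => simp
  | succ N ih =>
    rw [List.ofFn_succ, List.ofFn_succ, Fin.sum_univ_succ]
    have := ih (fun i => σ i.succ)
    rw [List.ofFn_succ] at this
    rw [incrSum_cons_cons, this]
    simp only [Fin.succ_zero_eq_one, Fin.castSucc_zero, Fin.succ_castSucc]

lemma incrSum_le_cons (x : ℝ) : ∀ l, incrSum q W l ≤ incrSum q W (x :: l)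
  | [] => le_rfl
  | _ :: _ => le_add_self

lemma incrSum_add_le_append : ∀ l₁ l₂ : List ℝ,
    incrSum q W l₁ + incrSum q W l₂ ≤ incrSum q W (l₁ ++ l₂)
  | [], _ => by simp
  | [x], l₂ => by simpa using incrSum_le_cons q W x l₂
  | x :: y :: l₁, l₂ => by
    rw [incrSum_cons_cons, add_assoc, List.cons_append, List.cons_append, incrSum_cons_cons,
      ← List.cons_append]
    gcongr
    exact incrSum_add_le_append (y :: l₁) l₂

/-- The `q`-th power of the `q`-variation of `W` on `s`. -/
def variationOn (s : Set ℝ) : ℝ≥0∞ :=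
  ⨆ (l : List ℝ) (_ : l.SortedLE ∧ ∀ x ∈ l, x ∈ s), incrSum q W l

variable {q W}

lemma incrSum_le_variationOn {s : Set ℝ} {l : List ℝ} (hl : l.SortedLE) (hs : ∀ x ∈ l, x ∈ s) :
    incrSum q W l ≤ variationOn q W s :=
  le_iSup₂_of_le l ⟨hl, hs⟩ le_rfl

lemma variationOn_add_le_union {s t : Set ℝ} (h : ∀ x ∈ s, ∀ y ∈ t, x ≤ y) :
    variationOn q W s + variationOn q W t ≤ variationOn q W (s ∪ t) := by
  have hnil : ∀ s : Set ℝ, ([] : List ℝ).SortedLE ∧ ∀ x ∈ ([] : List ℝ), x ∈ s :=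
    fun _ => ⟨List.sortedLE_iff_pairwise.2 List.Pairwise.nil, by simp⟩
  refine ENNReal.biSup_add_biSup_le' ⟨[], hnil s⟩ ⟨[], hnil t⟩ fun l₁ h₁ l₂ h₂ => ?_
  refine (incrSum_add_le_append q W l₁ l₂).trans (incrSum_le_variationOn ?_ ?_)
  · rw [List.sortedLE_iff_pairwise, List.pairwise_append]
    exact ⟨List.sortedLE_iff_pairwise.1 h₁.1, List.sortedLE_iff_pairwise.1 h₂.1,
      fun x hx y hy => h x (h₁.2 x hx) y (h₂.2 y hy)⟩
  · intro x hx
    rcases List.mem_append.1 hx with hx | hx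
    exacts [Or.inl (h₁.2 x hx), Or.inr (h₂.2 x hx)]

lemma sum_variationOn_le_biUnion {ι : Type*} [LinearOrder ι] (S : Finset ι) (J : ι → Set ℝ)
    (hJ : ∀ i ∈ S, ∀ j ∈ S, i < j → ∀ x ∈ J i, ∀ y ∈ J j, x ≤ y) :
    ∑ i ∈ S, variationOn q W (J i) ≤ variationOn q W (⋃ i ∈ S, J i) := by
  classical
  induction S using Finset.induction_on_max with
  | empty => simp
  | insert m S hlt ih =>
    rw [Finset.sum_insert fun hm => (hlt m hm).false, Finset.set_biUnion_insert, add_comm,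
      Set.union_comm]
    refine le_trans ?_ (variationOn_add_le_union ?_)
    · gcongr
      exact ih fun i hi j hj => hJ i (by simp [hi]) j (by simp [hj])
    · simp only [Set.mem_iUnion]
      rintro x ⟨i, hi, hx⟩ y hy
      exact hJ i (by simp [hi]) m (by simp) (hlt i hi) x hx y hy

lemma exists_chain_lt_incrSum_eq (hq : 0 < q) : ∀ l : List ℝ, l.IsChain (· ≤ ·) →
    ∃ l' : List ℝ, l'.IsChain (· < ·) ∧ incrSum q W l = incrSum q W l' ∧ l'.head? = l.head?
  | [], _ => ⟨[], by simp⟩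
  | [x], _ => ⟨[x], by simp⟩
  | x :: y :: l, h => by
    obtain ⟨hxy, hl⟩ := List.isChain_cons_cons.1 h
    obtain ⟨l', hl', hsum, hhead⟩ := exists_chain_lt_incrSum_eq hq (y :: l) hl
    obtain ⟨r, rfl⟩ : ∃ r, l' = y :: r := by
      cases l' with
      | nil => simp at hhead
      | cons z r => exact ⟨r, by simpa using hhead⟩
    rcases hxy.eq_or_lt with rfl | hlt
    · refine ⟨x :: r, hl', ?_, rfl⟩
      rw [incrSum_cons_cons, hsum, sub_self, enorm_zero, ENNReal.zero_rpow_of_pos hq, zero_add]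
    · exact ⟨x :: y :: r, List.isChain_cons_cons.2 ⟨hlt, hl'⟩, by
        rw [incrSum_cons_cons, incrSum_cons_cons, hsum], rfl⟩

lemma incrSum_eq_incrSum_map {z : ℝ → E} {P : ℝ → ℝ} {c : E} :
    ∀ l : List ℝ, (∀ x ∈ l, z x = W (P x) - c) → incrSum q z l = incrSum q W (l.map P)
  | [], _ => rfl
  | [_], _ => rfl
  | x :: y :: l, h => by
    simp only [List.map_cons, incrSum_cons_cons, h x (by simp), h y (by simp),
      sub_sub_sub_cancel_right]
    rw [← List.map_cons, incrSum_eq_incrSum_map (y :: l) fun x hx => h x (by simp [hx])]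

lemma incrSum_map_le_variationOn {P : ℝ → ℝ} {s t : Set ℝ} (hP : MonotoneOn P s)
    (hPt : ∀ x ∈ s, P x ∈ t) {l : List ℝ} (hl : l.SortedLE) (hls : ∀ x ∈ l, x ∈ s) :
    incrSum q W (l.map P) ≤ variationOn q W t := by
  refine incrSum_le_variationOn ?_ (by simpa using fun x hx => hPt x (hls x hx))
  rw [List.sortedLE_iff_pairwise, List.pairwise_map]
  exact (List.sortedLE_iff_pairwise.1 hl).imp_of_mem fun hx hy hxy => hP (hls _ hx) (hls _ hy) hxy

/-- A partition sees the increments of `W` along `P` and, once, the jump of `z` from `0` across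
`x₀`; each part is bounded by the variation of `W` on `[a, b]`. -/
lemma incrSum_le_two_mul_variationOn (hq : 0 < q) {z : ℝ → E} {P : ℝ → ℝ} {x₀ a b : ℝ}
    (hz : ∀ x, x₀ ≤ x → z x = W (P x) - W b) (hz₀ : ∀ x, x < x₀ → z x = 0)
    (hP : MonotoneOn P (Set.Ici x₀)) (hPab : ∀ x ∈ Set.Ici x₀, P x ∈ Set.Icc a b) :
    ∀ l : List ℝ, l.SortedLE → incrSum q z l ≤ 2 * variationOn q W (Set.Icc a b) := by
  have hright : ∀ l : List ℝ, l.SortedLE → (∀ x ∈ l, x₀ ≤ x) →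
      incrSum q z l ≤ variationOn q W (Set.Icc a b) := fun l hl hl₀ => by
    rw [incrSum_eq_incrSum_map l fun x hx => hz x (hl₀ x hx)]
    exact incrSum_map_le_variationOn hP hPab hl hl₀
  intro l hl
  rw [List.sortedLE_iff_pairwise] at hl
  induction l with
  | nil => exact zero_le
  | cons x l ih =>
    rcases l with _ | ⟨y, r⟩
    · exact zero_le
    obtain ⟨hx, hyr⟩ := List.pairwise_cons.1 hl
    rw [incrSum_cons_cons]
    by_cases hx₀ : x₀ ≤ x
    · refine (hright _ (List.sortedLE_iff_pairwise.2 hl) fun x' hx' => ?_).trans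
        (le_mul_of_one_le_left zero_le one_le_two)
      rcases List.mem_cons.1 hx' with rfl | hx'
      exacts [hx₀, hx₀.trans (hx x' hx')]
    rw [hz₀ x (not_le.1 hx₀), sub_zero]
    by_cases hy₀ : y < x₀
    · rw [hz₀ y hy₀, enorm_zero, ENNReal.zero_rpow_of_pos hq, zero_add]
      exact ih hyr
    have hy₀ : x₀ ≤ y := not_lt.1 hy₀
    rw [two_mul]
    gcongr
    · have hPy := hPab y hy₀
      rw [hz y hy₀, enorm_sub_rev, ← incrSum_pair]
      refine incrSum_le_variationOn (List.sortedLE_iff_pairwise.2 (by simpa using hPy.2)) ?_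
      simpa using ⟨hPy, hPy.1.trans hPy.2⟩
    · refine hright _ (List.sortedLE_iff_pairwise.2 hyr) fun x' hx' => ?_
      rcases List.mem_cons.1 hx' with rfl | hx'
      exacts [hy₀, hy₀.trans ((List.pairwise_cons.1 hyr).1 x' hx')]

end Variation

section PVar

variable {n : ℕ} {q : ℝ} {W : ℝ → Hsp n}

lemma incrSum_ofFn_le_pVar_rpow (hq : 0 < q) {N : ℕ} {t : Fin (N + 1) → ℝ} (ht : StrictMono t) :
    incrSum q W (List.ofFn t) ≤ pVar q W ^ q := by
  have h : incrSum q W (List.ofFn t) ^ (1 / q) ≤ pVar q W := by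
    simp only [pVar, incrSum_ofFn]
    exact le_iSup₂_of_le N t (le_iSup_of_le ht le_rfl)
  simpa [← ENNReal.rpow_mul, inv_mul_cancel₀ hq.ne'] using ENNReal.rpow_le_rpow h hq.le

lemma incrSum_le_pVar_rpow (hq : 0 < q) {l : List ℝ} (hl : l.SortedLE) :
    incrSum q W l ≤ pVar q W ^ q := by
  obtain ⟨l', hl', hsum, -⟩ := exists_chain_lt_incrSum_eq (W := W) hq l hl.isChain
  rw [hsum]
  rcases l' with _ | ⟨x, r⟩
  · exact zero_le
  rw [← List.ofFn_get (x :: r)]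
  exact incrSum_ofFn_le_pVar_rpow hq (List.sortedLT_iff_isChain.2 hl')

lemma variationOn_le_pVar_rpow (hq : 0 < q) (s : Set ℝ) : variationOn q W s ≤ pVar q W ^ q :=
  iSup₂_le fun _ hl => incrSum_le_pVar_rpow hq hl.1

lemma variationOn_le_one (hq : 0 < q) (hW : pVar q W ≤ 1) (s : Set ℝ) :
    variationOn q W s ≤ 1 :=
  (variationOn_le_pVar_rpow hq s).trans (ENNReal.rpow_le_one hW hq.le)

lemma pVar_le_of_incrSum_le (hq : 0 < q) {C : ℝ≥0∞}
    (h : ∀ l : List ℝ, l.SortedLT → incrSum q W l ≤ C) : pVar q W ≤ C ^ (1 / q) := by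
  refine iSup_le fun N => iSup_le fun t => iSup_le fun ht => ENNReal.rpow_le_rpow ?_ (by positivity)
  have := h _ (List.sortedLT_ofFn_iff.2 ht)
  rwa [incrSum_ofFn] at this

lemma enorm_sub_le_pVar (hq : 0 < q) {x y : ℝ} (hxy : x < y) : ‖W y - W x‖ₑ ≤ pVar q W := by
  have h := incrSum_ofFn_le_pVar_rpow (W := W) hq (t := ![x, y]) (by simpa using hxy)
  simp only [List.ofFn_succ, Matrix.cons_val_zero, Matrix.cons_val_succ, List.ofFn_zero,
    incrSum_pair] at h
  exact (ENNReal.rpow_le_rpow_iff hq).1 h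

end PVar

lemma exists_castSucc_le_lt_succ {α : Type*} [LinearOrder α] {K : ℕ} (e : Fin (K + 1) → α) {x : α}
    (h0 : e 0 ≤ x) (hK : x < e (Fin.last K)) : ∃ i : Fin K, e i.castSucc ≤ x ∧ x < e i.succ := by
  induction K with
  | zero => exact absurd (h0.trans_lt hK) (lt_irrefl _)
  | succ K ih =>
    by_cases h1 : x < e 1
    · exact ⟨0, h0, h1⟩
    · obtain ⟨i, hi⟩ := ih (fun i => e i.succ) (not_lt.1 h1) hK
      exact ⟨i.succ, hi⟩

section StepFun

variable {n N : ℕ} {t : Fin (N + 1) → ℝ} {x : ℝ}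

lemma stepFun_apply_of_lt (ht : Monotone t) (f : Fin (N + 1) → Hsp n) (hx : x < t 0) :
    stepFun N t f x = 0 := by
  have hlt : ∀ j, x < t j := fun j => hx.trans_le (ht (Fin.zero_le j))
  simp [stepFun, (hlt _).not_ge]

lemma stepFun_apply_of_mem_Ico (ht : Monotone t) (f : Fin (N + 1) → Hsp n) (j : Fin N)
    (hx₁ : t j.castSucc ≤ x) (hx₂ : x < t j.succ) : stepFun N t f x = f j.castSucc := by
  have hlast : ¬ t (Fin.last N) ≤ x := fun h => hx₂.not_ge ((ht (Fin.le_last _)).trans h)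
  have hother : ∀ j' ≠ j, x ∉ Set.Ico (t j'.castSucc) (t j'.succ) := by
    rintro j' hj' ⟨h₁, h₂⟩
    rcases lt_or_gt_of_ne hj' with h | h
    · exact h₂.not_ge ((ht (Fin.succ_le_castSucc_iff.2 h)).trans hx₁)
    · exact hx₂.not_ge ((ht (Fin.succ_le_castSucc_iff.2 h)).trans h₁)
  simp only [stepFun, Set.indicator_of_notMem (Set.notMem_Ici.2 (not_le.1 hlast)), add_zero]
  rw [Finset.sum_eq_single j (fun j' _ hj' => Set.indicator_of_notMem (hother j' hj') _)
    (by simp), Set.indicator_of_mem (Set.mem_Ico.2 ⟨hx₁, hx₂⟩)]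

lemma stepFun_apply_of_last_le (ht : Monotone t) (f : Fin (N + 1) → Hsp n)
    (hx : t (Fin.last N) ≤ x) : stepFun N t f x = f (Fin.last N) := by
  have hnot : ∀ j : Fin N, x ∉ Set.Ico (t j.castSucc) (t j.succ) := fun j h =>
    h.2.not_ge ((ht (Fin.le_last _)).trans hx)
  simp [stepFun, Set.indicator_of_notMem (hnot _), hx]

lemma stepFun_apply_self (ht : StrictMono t) (f : Fin (N + 1) → Hsp n) (j : Fin (N + 1)) :
    stepFun N t f (t j) = f j := by
  induction j using Fin.lastCases with
  | last => exact stepFun_apply_of_last_le ht.monotone f le_rfl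
  | cast j => exact stepFun_apply_of_mem_Ico ht.monotone f j le_rfl (ht (Fin.castSucc_lt_succ))

lemma exists_stepFun_apply_eq (ht : StrictMono t) (f : Fin (N + 1) → Hsp n) (hx : t 0 ≤ x) :
    ∃ j, t j ≤ x ∧ (∀ j', t j' ≤ x → j' ≤ j) ∧ stepFun N t f x = f j := by
  by_cases hlast : t (Fin.last N) ≤ x
  · exact ⟨_, hlast, fun j' _ => Fin.le_last j', stepFun_apply_of_last_le ht.monotone f hlast⟩
  obtain ⟨i, hi₁, hi₂⟩ := exists_castSucc_le_lt_succ t hx (not_le.1 hlast)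
  refine ⟨i.castSucc, hi₁, fun j' hj' => ?_, stepFun_apply_of_mem_Ico ht.monotone f i hi₁ hi₂⟩
  exact Fin.le_castSucc_iff.2 (ht.lt_iff_lt.1 (hj'.trans_lt hi₂))

lemma stepFun_eq_zero_of_notMem_Ico (ht : Monotone t) {f : Fin (N + 1) → Hsp n}
    (hf : f (Fin.last N) = 0) (hx : x ∉ Set.Ico (t 0) (t (Fin.last N))) : stepFun N t f x = 0 := by
  rcases lt_or_ge x (t 0) with hx₀ | hx₀
  · exact stepFun_apply_of_lt ht f hx₀
  · rw [stepFun_apply_of_last_le ht f (not_lt.1 fun h => hx ⟨hx₀, h⟩), hf]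

lemma stepFun_smul (c : ℂ) (f : Fin (N + 1) → Hsp n) :
    stepFun N t (c • f) = c • stepFun N t f := by
  ext1 x
  simp only [stepFun, Pi.smul_apply, smul_add, Finset.smul_sum, Set.indicator_apply]
  simp only [apply_ite (c • ·), smul_zero]

end StepFun

section Pairing

variable {n N : ℕ} {q : ℝ}

lemma pVar_smul (hq : 0 < q) (c : ℂ) (v : ℝ → Hsp n) : pVar q (c • v) = ‖c‖ₑ * pVar q v := by
  simp only [pVar, ENNReal.mul_iSup, Pi.smul_apply, ← smul_sub]
  congr! 5 with N t _
  simp only [← enorm_eq_nnnorm, enorm_smul, ENNReal.mul_rpow_of_nonneg _ _ hq.le,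
    ← Finset.mul_sum]
  rw [ENNReal.mul_rpow_of_nonneg _ _ (by positivity), ← ENNReal.rpow_mul,
    mul_one_div_cancel hq.ne', ENNReal.rpow_one]

lemma Bpair_smul (t : Fin (N + 1) → ℝ) (c : ℂ) (w u : ℝ → Hsp n) :
    Bpair N t (c • w) u = starRingEnd ℂ c * Bpair N t w u := by
  simp only [Bpair, Pi.smul_apply, ← smul_sub, inner_smul_left, mul_add, Finset.mul_sum]

lemma Bpair_eq_zero (t : Fin (N + 1) → ℝ) {w : ℝ → Hsp n} (u : ℝ → Hsp n)
    (hw : ∀ j, w (t j) = 0) : Bpair N t w u = 0 := by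
  simp [Bpair, hw]

lemma Bpair_eq_sum_range {t : Fin (N + 1) → ℝ} (σ : ℕ → ℝ) (hσ : ∀ k : Fin (N + 1), σ (k + 1) = t k)
    {w : ℝ → Hsp n} (hw : w (σ 0) = 0) (u : ℝ → Hsp n) :
    Bpair N t w u = ∑ k ∈ Finset.range (N + 1),
      inner ℂ (w (σ (k + 1)) - w (σ k)) (u (σ (k + 1))) := by
  rw [Finset.sum_range_succ', add_comm, Bpair, ← Fin.sum_univ_eq_sum_range]
  have h0 := hσ 0
  simp only [Fin.val_zero, zero_add] at h0
  congr 1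
  · rw [h0, hw, sub_zero]
  · refine Finset.sum_congr rfl fun j _ => ?_
    have h₁ := hσ j.succ
    have h₂ := hσ j.castSucc
    simp only [Fin.val_succ, Fin.val_castSucc] at h₁ h₂
    rw [h₁, h₂]

lemma enorm_Bpair_le_mul_UdisNormLoc (hq : 0 < q) {t : Fin (N + 1) → ℝ} (ht : StrictMono t)
    {f : Fin (N + 1) → Hsp n} {a b : EReal}
    (hsupp : ∀ s : ℝ, ¬(a < (s : EReal) ∧ (s : EReal) < b) → stepFun N t f s = 0)
    {C : ℝ≥0∞} (hC : pVar q (stepFun N t f) ≤ C) (hC' : C ≠ ⊤) (u : ℝ → Hsp n) :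
    ‖Bpair N t (stepFun N t f) u‖ₑ ≤ C * UdisNormLoc q a b u := by
  rcases eq_zero_or_pos C with rfl | hCpos
  · -- a step function of zero variation vanishes, as it does to the left of `t 0`
    have hzero : ∀ j, stepFun N t f (t j) = 0 := fun j => by
      have hlt : t 0 - 1 < t j := (sub_one_lt _).trans_le (ht.monotone (Fin.zero_le j))
      have := (enorm_sub_le_pVar hq hlt).trans hC
      rwa [stepFun_apply_of_lt ht.monotone f (sub_one_lt _), sub_zero, nonpos_iff_eq_zero,
        enorm_eq_zero] at this
    simp [Bpair_eq_zero t u hzero]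
  set c : ℂ := ((C.toReal⁻¹ : ℝ) : ℂ)
  have hc : ‖c‖ₑ = C⁻¹ := by
    rw [enorm_eq_nnnorm, Complex.nnnorm_real, ← enorm_eq_nnnorm,
      Real.enorm_eq_ofReal (by positivity),
      ENNReal.ofReal_inv_of_pos (ENNReal.toReal_pos hCpos.ne' hC'), ENNReal.ofReal_toReal hC']
  have hsupp' : ∀ s : ℝ, ¬(a < (s : EReal) ∧ (s : EReal) < b) → stepFun N t (c • f) s = 0 :=
    fun s hs => by rw [stepFun_smul, Pi.smul_apply, hsupp s hs, smul_zero]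
  have hpVar : pVar q (stepFun N t (c • f)) ≤ 1 := by
    rw [stepFun_smul, pVar_smul hq, hc]
    calc C⁻¹ * pVar q (stepFun N t f) ≤ C⁻¹ * C := by gcongr
      _ = 1 := ENNReal.inv_mul_cancel hCpos.ne' hC'
  have hB : C⁻¹ * ‖Bpair N t (stepFun N t f) u‖ₑ ≤ UdisNormLoc q a b u := by
    refine le_iSup_of_le N <| le_iSup_of_le t <| le_iSup_of_le ht <| le_iSup_of_le (c • f) <|
      le_iSup_of_le hsupp' <| le_iSup_of_le hpVar (le_of_eq ?_)
    rw [stepFun_smul, Bpair_smul, ← enorm_eq_nnnorm, enorm_mul, RCLike.enorm_conj, hc]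
  calc ‖Bpair N t (stepFun N t f) u‖ₑ = C * (C⁻¹ * ‖Bpair N t (stepFun N t f) u‖ₑ) := by
        rw [← mul_assoc, ENNReal.mul_inv_cancel hCpos.ne' hC', one_mul]
    _ ≤ C * UdisNormLoc q a b u := by gcongr

lemma pVar_stepFun_sub_last_le (hq : 0 < q) {m : ℕ} {τ ρ : Fin (m + 1) → ℝ} (hτ : StrictMono τ)
    (hρ : Monotone ρ) (W : ℝ → Hsp n) :
    pVar q (stepFun m τ fun j => W (ρ j) - W (ρ (Fin.last m))) ≤
      (2 * variationOn q W (Set.Icc (ρ 0) (ρ (Fin.last m)))) ^ (1 / q) := by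
  choose J hJτ hJmax hJ using fun x (hx : τ 0 ≤ x) =>
    exists_stepFun_apply_eq hτ (fun j => W (ρ j) - W (ρ (Fin.last m))) hx
  let P : ℝ → ℝ := fun x => if hx : τ 0 ≤ x then ρ (J x hx) else ρ (Fin.last m)
  have hP : ∀ x (hx : τ 0 ≤ x), P x = ρ (J x hx) := fun x hx => dif_pos hx
  refine pVar_le_of_incrSum_le hq fun l hl =>
    incrSum_le_two_mul_variationOn hq (P := P) (x₀ := τ 0) (fun x hx => ?_)
      (fun x hx => stepFun_apply_of_lt hτ.monotone _ hx) (fun x hx y hy hxy => ?_)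
      (fun x hx => ?_) l hl.sortedLE
  · rw [hJ x hx, hP x hx]
  · rw [hP x hx, hP y hy]
    exact hρ (hJmax y hy _ ((hJτ x hx).trans hxy))
  · rw [hP x hx]
    exact ⟨hρ (Fin.zero_le _), hρ (Fin.le_last _)⟩

lemma Bpair_stepFun {N : ℕ} {t : Fin (N + 1) → ℝ} (ht : StrictMono t) (f : Fin (N + 1) → Hsp n)
    (u : ℝ → Hsp n) :
    Bpair N t (stepFun N t f) u =
      inner ℂ (f 0) (u (t 0)) + ∑ j : Fin N, inner ℂ (f j.succ - f j.castSucc) (u (t j.succ)) := by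
  simp only [Bpair, stepFun_apply_self ht]

/-- Up to the last term, the sum is the pairing of `u` with the step function `h` that starts at
`ℓ`, freezes `W` at `σ A, …, σ B` and vanishes from `σ B` on; `h` is supported in `(a, b)`. -/
lemma enorm_sum_Ico_inner_le (hq : 0 < q) {σ : ℕ → ℝ} (hσ : StrictMono σ) (W u : ℝ → Hsp n)
    (c : Hsp n) {A B : ℕ} (hAB : A < B) {ℓ : ℝ} (hℓ : ℓ < σ (A + 1)) {a b : EReal}
    (ha : a < ℓ) (hb : (σ B : EReal) < b)
    (hV : variationOn q W (Set.Icc (σ A) (σ B)) ≠ ⊤) :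
    ‖∑ k ∈ Finset.Ico A B, inner ℂ (W (σ (k + 1)) - W (σ k)) (u (σ (k + 1)) - c)‖ₑ ≤
      (2 * variationOn q W (Set.Icc (σ A) (σ B))) ^ (1 / q) * UdisNormLoc q a b u +
        ‖W (σ B) - W (σ A)‖ₑ * ‖u ℓ - c‖ₑ := by
  obtain ⟨m, rfl⟩ : ∃ m, B = A + m + 1 := ⟨B - A - 1, by omega⟩
  let τ : Fin (m + 2) → ℝ := Fin.cons ℓ fun j => σ (A + j + 1)
  let ρ : Fin (m + 2) → ℝ := fun j => σ (A + j)
  let h : Fin (m + 2) → Hsp n := fun j => W (ρ j) - W (ρ (Fin.last (m + 1)))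
  have hτ : StrictMono τ := Fin.strictMono_cons.2
    ⟨fun j => hℓ.trans_le (hσ.monotone (by omega)), fun i j hij => hσ (by simp [hij])⟩
  have hρ : Monotone ρ := fun i j hij => hσ.monotone (by simp [hij])
  have hρ_last : ρ (Fin.last (m + 1)) = σ (A + m + 1) := by simp [ρ, add_assoc]
  have hτ_last : τ (Fin.last (m + 1)) = σ (A + m + 1) := by
    rw [← Fin.succ_last]; simp [τ]
  have hsum : ∑ k ∈ Finset.Ico A (A + m + 1), inner ℂ (W (σ (k + 1)) - W (σ k)) (u (σ (k + 1))) =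
      ∑ j : Fin (m + 1), inner ℂ (h j.succ - h j.castSucc) (u (τ j.succ)) := by
    rw [Finset.sum_Ico_eq_sum_range, show A + m + 1 - A = m + 1 by omega,
      ← Fin.sum_univ_eq_sum_range]
    refine Finset.sum_congr rfl fun j _ => ?_
    simp [h, ρ, τ, add_assoc]
  have htel := Finset.sum_Ico_sub (fun k => W (σ k)) hAB.le
  have hsplit : ∑ k ∈ Finset.Ico A (A + m + 1),
      inner ℂ (W (σ (k + 1)) - W (σ k)) (u (σ (k + 1)) - c) =
        Bpair (m + 1) τ (stepFun (m + 1) τ h) u +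
          inner ℂ (W (σ (A + m + 1)) - W (σ A)) (u ℓ - c) := by
    simp only [inner_sub_right, Finset.sum_sub_distrib, ← sum_inner, htel, hsum,
      Bpair_stepFun hτ]
    have h0 : h 0 = -(W (σ (A + m + 1)) - W (σ A)) := by
      rw [neg_sub]; simp only [h, hρ_last]; simp [ρ]
    rw [h0, inner_neg_left, show τ 0 = ℓ from rfl]
    ring
  have hsupp : ∀ s : ℝ, ¬(a < (s : EReal) ∧ (s : EReal) < b) → stepFun (m + 1) τ h s = 0 :=
    fun s hs => stepFun_eq_zero_of_notMem_Ico hτ.monotone (sub_self _) fun hs' => hs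
      ⟨ha.trans_le (EReal.coe_le_coe_iff.2 hs'.1),
        (EReal.coe_lt_coe_iff.2 (hs'.2.trans_eq hτ_last)).trans hb⟩
  have hpVar := pVar_stepFun_sub_last_le hq hτ hρ W
  rw [hρ_last] at hpVar
  rw [hsplit]
  refine (enorm_add_le _ _).trans (add_le_add ?_ ?_)
  · exact enorm_Bpair_le_mul_UdisNormLoc hq hτ hsupp hpVar
      (ENNReal.rpow_ne_top_of_nonneg (by positivity) (ENNReal.mul_ne_top (by simp) hV)) u
  · simpa [enorm_eq_nnnorm] using ENNReal.coe_le_coe.2 (nnnorm_inner_le_nnnorm _ _)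

end Pairing

lemma exists_strictMono_nat_succ_eq {M : ℕ} {t : Fin (M + 1) → ℝ} (ht : StrictMono t) :
    ∃ σ : ℕ → ℝ, StrictMono σ ∧ ∀ k : Fin (M + 1), σ (k + 1) = t k := by
  let σ : ℕ → ℝ := fun k =>
    if k = 0 then t 0 - 1 else if h : k ≤ M + 1 then t ⟨k - 1, by omega⟩ else t (Fin.last M) + k
  refine ⟨σ, strictMono_nat_of_lt_succ fun k => ?_, fun k => ?_⟩
  · rcases Nat.lt_trichotomy k (M + 1) with hk | rfl | hk
    · rcases Nat.eq_zero_or_pos k with rfl | hk₀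
      · simp [σ]
      · simp only [σ, dif_pos hk.le, dif_pos (Nat.succ_le_of_lt hk), hk₀.ne', if_false,
          Nat.succ_ne_zero]
        exact ht (Fin.mk_lt_mk.2 (by omega))
    · simp only [σ, dif_pos le_rfl, dif_neg (by omega : ¬ M + 1 + 1 ≤ M + 1), Nat.succ_ne_zero,
        if_false]
      exact lt_add_of_le_of_pos (ht.monotone (Fin.le_last _)) (by positivity)
    · simp only [σ, dif_neg (by omega : ¬ k ≤ M + 1), dif_neg (by omega : ¬ k + 1 ≤ M + 1),
        if_neg (show k ≠ 0 by omega), Nat.succ_ne_zero, if_false]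
      push_cast; linarith
  · simp [σ, Nat.succ_le_of_lt k.isLt]

lemma exists_filter_range_eq_Ico {α : Type*} [Preorder α] {x : ℕ → α} (hx : Monotone x)
    {I : Set α} [DecidablePred (· ∈ I)] (hI : I.OrdConnected) (n : ℕ) :
    ∃ A B, (Finset.range n).filter (fun k => x k ∈ I) = Finset.Ico A B := by
  set P := (Finset.range n).filter (fun k => x k ∈ I)
  rcases P.eq_empty_or_nonempty with hP | hP
  · exact ⟨0, 0, by simp [hP]⟩
  refine ⟨P.min' hP, P.max' hP + 1, ?_⟩
  ext k
  constructor
  · intro hk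
    exact Finset.mem_Ico.2 ⟨P.min'_le k hk, Nat.lt_succ_of_le (P.le_max' k hk)⟩
  · intro hk
    obtain ⟨h₁, h₂⟩ := Finset.mem_Ico.1 hk
    have hmin := Finset.mem_filter.1 (P.min'_mem hP)
    have hmax := Finset.mem_filter.1 (P.max'_mem hP)
    refine Finset.mem_filter.2 ⟨Finset.mem_range.2 ?_, hI.out hmin.2 hmax.2 ⟨hx h₁, hx ?_⟩⟩
    · exact lt_of_le_of_lt (Nat.le_of_lt_succ h₂) (Finset.mem_range.1 hmax.1)
    · exact Nat.le_of_lt_succ h₂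

lemma sum_le_two_rpow_mul_add {ι : Type*} (S : Finset ι) {G L V : ι → ℝ≥0∞} {p q : ℝ}
    (hpq : p.HolderConjugate q) {δ : ℝ≥0∞} (hG : ∀ i ∈ S, G i ≤ (2 * V i) ^ (1 / q) * L i + δ)
    (hV : ∑ i ∈ S, V i ≤ 1) :
    ∑ i ∈ S, G i ≤ 2 ^ (1 / q) * (∑ i ∈ S, L i ^ p) ^ (1 / p) + S.card * δ := by
  have hq := hpq.symm.pos
  have hV₂ : ∑ i ∈ S, 2 * V i ≤ 2 := by
    rw [← Finset.mul_sum]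
    exact mul_le_of_le_one_right' hV
  calc ∑ i ∈ S, G i ≤ ∑ i ∈ S, (L i * (2 * V i) ^ (1 / q) + δ) := by
        gcongr with i hi
        rw [mul_comm]
        exact hG i hi
    _ ≤ (∑ i ∈ S, L i ^ p) ^ (1 / p) * (∑ i ∈ S, ((2 * V i) ^ (1 / q)) ^ q) ^ (1 / q)
          + S.card * δ := by
        rw [Finset.sum_add_distrib, Finset.sum_const, nsmul_eq_mul]
        gcongr
        exact ENNReal.inner_le_Lp_mul_Lq S _ _ hpq
    _ ≤ 2 ^ (1 / q) * (∑ i ∈ S, L i ^ p) ^ (1 / p) + S.card * δ := by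
        simp_rw [← ENNReal.rpow_mul, one_div_mul_cancel hq.ne', ENNReal.rpow_one]
        rw [mul_comm]
        gcongr

section Gaps

variable {n N : ℕ} {t : Fin (N + 1) → ℝ}

/-- The partition points `t 0 < ⋯ < t N` framed by `⊥ = -∞` and `⊤ = ∞`, so that the gaps of the
partition are the intervals `(gapEnd t i.castSucc, gapEnd t i.succ)`, `i : Fin (N + 2)`. -/
def gapEnd (t : Fin (N + 1) → ℝ) : Fin (N + 3) → EReal :=
  Fin.cons ⊥ (Fin.snoc (fun j => (t j : EReal)) ⊤)

@[simp] lemma gapEnd_zero : gapEnd t 0 = ⊥ := rfl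

@[simp] lemma gapEnd_castSucc_succ (j : Fin (N + 1)) : gapEnd t j.castSucc.succ = t j := by
  simp [gapEnd]

@[simp] lemma gapEnd_last : gapEnd t (Fin.last (N + 2)) = ⊤ := by
  rw [← Fin.succ_last]
  simp [gapEnd]

lemma gapEnd_ne_coe {x : ℝ} (hx : ∀ j, x ≠ t j) (k : Fin (N + 3)) : gapEnd t k ≠ x := by
  induction k using Fin.cases with
  | zero => exact EReal.bot_ne_coe x
  | succ k =>
    induction k using Fin.lastCases with
    | last => simp
    | cast j => simpa using (hx j).symm

lemma gapEnd_strictMono (ht : StrictMono t) : StrictMono (gapEnd t) := by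
  refine Fin.strictMono_iff_lt_succ.2 fun i => ?_
  induction i using Fin.cases with
  | zero =>
    show ⊥ < gapEnd t (Fin.castSucc (0 : Fin (N + 1))).succ
    rw [gapEnd_castSucc_succ]
    exact EReal.bot_lt_coe _
  | succ i =>
    rw [Fin.castSucc_succ, gapEnd_castSucc_succ]
    induction i using Fin.lastCases with
    | last => simp
    | cast j =>
      rw [← Fin.castSucc_succ, gapEnd_castSucc_succ]
      exact EReal.coe_lt_coe_iff.2 (ht Fin.castSucc_lt_succ)

lemma exists_mem_gap {x : ℝ} (hx : ∀ j, x ≠ t j) :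
    ∃ i : Fin (N + 2), gapEnd t i.castSucc < x ∧ (x : EReal) < gapEnd t i.succ := by
  obtain ⟨i, h₁, h₂⟩ := exists_castSucc_le_lt_succ (gapEnd t) (x := (x : EReal)) (by simp)
    (by simp)
  exact ⟨i, h₁.lt_of_ne (gapEnd_ne_coe hx _), h₂⟩

lemma sum_eq_sum_gap {M : Type*} [AddCommMonoid M] (ht : StrictMono t) (K : Finset ℕ)
    (x : ℕ → ℝ) (F : ℕ → M) (hF : ∀ k ∈ K, ∀ j, x k = t j → F k = 0) :
    ∑ k ∈ K, F k = ∑ i : Fin (N + 2),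
      ∑ k ∈ K.filter (fun k => (x k : EReal) ∈ Set.Ioo (gapEnd t i.castSucc) (gapEnd t i.succ)),
        F k := by
  classical
  rw [← Finset.sum_biUnion]
  · refine (Finset.sum_subset (fun k hk => ?_) fun k hk hnot => ?_).symm
    · obtain ⟨i, -, hi⟩ := Finset.mem_biUnion.1 hk
      exact (Finset.mem_filter.1 hi).1
    · by_contra hne
      obtain ⟨i, hi⟩ := exists_mem_gap fun j h => hne (hF k hk j h)
      exact hnot (Finset.mem_biUnion.2 ⟨i, Finset.mem_univ _, Finset.mem_filter.2 ⟨hk, hi⟩⟩)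
  · have hdisj : ∀ i i' : Fin (N + 2), i < i' → Disjoint
        (K.filter fun k => (x k : EReal) ∈ Set.Ioo (gapEnd t i.castSucc) (gapEnd t i.succ))
        (K.filter fun k => (x k : EReal) ∈ Set.Ioo (gapEnd t i'.castSucc) (gapEnd t i'.succ)) :=
      fun i i' hlt => Finset.disjoint_filter.2 fun k _ hk hk' =>
        (hk.2.trans_le ((gapEnd_strictMono ht).monotone (Fin.succ_le_castSucc_iff.2 hlt))).not_gt
          hk'.1
    intro i _ i' _ hii'
    rcases hii'.lt_or_gt with hlt | hlt
    exacts [hdisj i i' hlt, (hdisj i' i hlt).symm]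

lemma lt_of_mem_gap (ht : StrictMono t) {i i' : Fin (N + 2)} (hii' : i < i') {x x' : ℝ}
    (hx : (x : EReal) ∈ Set.Ioo (gapEnd t i.castSucc) (gapEnd t i.succ))
    (hx' : (x' : EReal) ∈ Set.Ioo (gapEnd t i'.castSucc) (gapEnd t i'.succ)) : x < x' :=
  EReal.coe_lt_coe_iff.1 <| (hx.2.trans_le <|
    (gapEnd_strictMono ht).monotone (Fin.succ_le_castSucc_iff.2 hii')).trans hx'.1

lemma stepFun_apply_of_mem_gap (ht : Monotone t) (f : Fin (N + 1) → Hsp n) (i : Fin (N + 2))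
    {x : ℝ} (h₁ : gapEnd t i.castSucc ≤ x) (h₂ : (x : EReal) < gapEnd t i.succ) :
    stepFun N t f x = (Fin.cons 0 f : Fin (N + 2) → Hsp n) i := by
  induction i using Fin.cases with
  | zero =>
    rw [show (0 : Fin (N + 2)).succ = (0 : Fin (N + 1)).castSucc.succ from rfl,
      gapEnd_castSucc_succ, EReal.coe_lt_coe_iff] at h₂
    exact stepFun_apply_of_lt ht f h₂
  | succ j =>
    rw [Fin.castSucc_succ, gapEnd_castSucc_succ, EReal.coe_le_coe_iff] at h₁
    rw [Fin.cons_succ]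
    induction j using Fin.lastCases with
    | last => exact stepFun_apply_of_last_le ht f h₁
    | cast k =>
      rw [← Fin.castSucc_succ, gapEnd_castSucc_succ, EReal.coe_lt_coe_iff] at h₂
      exact stepFun_apply_of_mem_Ico ht f k h₁ h₂

lemma sum_gapEnd {M : Type*} [AddCommMonoid M] (F : EReal → EReal → M) :
    (F ⊥ (t 0) + ∑ j : Fin N, F (t j.castSucc) (t j.succ)) + F (t (Fin.last N)) ⊤ =
      ∑ i : Fin (N + 2), F (gapEnd t i.castSucc) (gapEnd t i.succ) := by
  have h₀ : gapEnd t (Fin.succ 0) = t 0 := gapEnd_castSucc_succ 0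
  have h₁ (i : Fin N) : gapEnd t i.castSucc.succ.castSucc = t i.castSucc := by
    rw [Fin.castSucc_succ, gapEnd_castSucc_succ]
  have h₂ (i : Fin N) : gapEnd t i.castSucc.succ.succ = t i.succ := by
    rw [Fin.succ_castSucc, gapEnd_castSucc_succ]
  have h₃ : gapEnd t (Fin.last N).succ.castSucc = t (Fin.last N) := by
    rw [Fin.castSucc_succ, gapEnd_castSucc_succ]
  have h₄ : gapEnd t (Fin.last N).succ.succ = ⊤ := by simp
  rw [Fin.sum_univ_succ, Fin.sum_univ_castSucc, add_assoc]
  simp only [Fin.castSucc_zero, gapEnd_zero, h₀, h₁, h₂, h₃, h₄]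

end Gaps

section Main

variable {n N : ℕ} {q : ℝ} {t : Fin (N + 1) → ℝ} {u : ℝ → Hsp n}

lemma exists_near_gapEnd (hrc : ∀ s : ℝ, ContinuousWithinAt u (Set.Ici s) s)
    (hlim : Filter.Tendsto u Filter.atBot (nhds 0)) (i : Fin (N + 2)) {y : ℝ}
    (hy : gapEnd t i.castSucc < y) {δ : ℝ≥0∞} (hδ : 0 < δ) :
    ∃ ℓ : ℝ, gapEnd t i.castSucc < ℓ ∧ ℓ < y ∧
      ‖u ℓ - (Fin.cons 0 fun j => u (t j) : Fin (N + 2) → Hsp n) i‖ₑ < δ := by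
  induction i using Fin.cases with
  | zero =>
    obtain ⟨ℓ, hℓ, hℓy⟩ :=
      ((EMetric.tendsto_nhds.1 hlim δ hδ).and (Filter.eventually_lt_atBot y)).exists
    exact ⟨ℓ, EReal.bot_lt_coe ℓ, hℓy, by simpa [edist_eq_enorm_sub] using hℓ⟩
  | succ j =>
    rw [Fin.castSucc_succ, gapEnd_castSucc_succ, EReal.coe_lt_coe_iff] at hy
    have hcont : Filter.Tendsto u (nhdsWithin (t j) (Set.Ioi (t j))) (nhds (u (t j))) :=
      (hrc (t j)).mono Set.Ioi_subset_Ici_self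
    obtain ⟨ℓ, hℓ, hℓy⟩ := ((EMetric.tendsto_nhds.1 hcont δ hδ).and
      (Ioo_mem_nhdsGT hy)).exists
    refine ⟨ℓ, ?_, hℓy.2, by simpa [edist_eq_enorm_sub] using hℓ⟩
    rw [Fin.castSucc_succ, gapEnd_castSucc_succ]
    exact EReal.coe_lt_coe_iff.2 hℓy.1

lemma enorm_sum_gap_le (hq : 0 < q) (hrc : ∀ s : ℝ, ContinuousWithinAt u (Set.Ici s) s)
    (hlim : Filter.Tendsto u Filter.atBot (nhds 0)) (ht : Monotone t) {σ : ℕ → ℝ}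
    (hσ : StrictMono σ) {W : ℝ → Hsp n} (hW : pVar q W ≤ 1) (i : Fin (N + 2)) {A B : ℕ}
    (hAB : A < B) (hbin : ∀ k ∈ Finset.Ico A B,
      (σ (k + 1) : EReal) ∈ Set.Ioo (gapEnd t i.castSucc) (gapEnd t i.succ))
    {δ : ℝ≥0∞} (hδ : 0 < δ) :
    ‖∑ k ∈ Finset.Ico A B, inner ℂ (W (σ (k + 1)) - W (σ k))
        ((u - stepFun N t fun j => u (t j)) (σ (k + 1)))‖ₑ ≤
      (2 * variationOn q W (Set.Icc (σ A) (σ B))) ^ (1 / q) *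
        UdisNormLoc q (gapEnd t i.castSucc) (gapEnd t i.succ) u + δ := by
  set c : Hsp n := (Fin.cons 0 fun j => u (t j) : Fin (N + 2) → Hsp n) i
  have hv : ∀ k ∈ Finset.Ico A B,
      (u - stepFun N t fun j => u (t j)) (σ (k + 1)) = u (σ (k + 1)) - c := fun k hk => by
    rw [Pi.sub_apply, stepFun_apply_of_mem_gap ht _ i (hbin k hk).1.le (hbin k hk).2]
  have hA := hbin A (Finset.mem_Ico.2 ⟨le_rfl, hAB⟩)
  have hB := (hbin (B - 1) (Finset.mem_Ico.2 ⟨by omega, by omega⟩)).2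
  rw [Nat.sub_add_cancel (by omega : 1 ≤ B)] at hB
  obtain ⟨ℓ, hℓ₁, hℓ₂, hℓc⟩ := exists_near_gapEnd hrc hlim i hA.1 hδ
  have hWσ : ‖W (σ B) - W (σ A)‖ₑ ≤ 1 := (enorm_sub_le_pVar hq (hσ hAB)).trans hW
  have hV : variationOn q W (Set.Icc (σ A) (σ B)) ≠ ⊤ :=
    ((variationOn_le_one hq hW _).trans_lt ENNReal.one_lt_top).ne
  rw [Finset.sum_congr rfl fun k hk => by rw [hv k hk]]
  refine (enorm_sum_Ico_inner_le hq hσ W u c hAB hℓ₂ hℓ₁ hB hV).trans ?_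
  gcongr
  calc ‖W (σ B) - W (σ A)‖ₑ * ‖u ℓ - c‖ₑ ≤ 1 * δ := by gcongr
    _ = δ := one_mul δ

lemma exists_Bpair_eq_sum_gap (ht : StrictMono t) {M : ℕ} {s : Fin (M + 1) → ℝ}
    (hs : StrictMono s) (f : Fin (M + 1) → Hsp n) {v : ℝ → Hsp n} (hv : ∀ j, v (t j) = 0) :
    ∃ σ : ℕ → ℝ, StrictMono σ ∧ ∃ A B : Fin (N + 2) → ℕ,
      (∀ i, ∀ k ∈ Finset.Ico (A i) (B i),
        (σ (k + 1) : EReal) ∈ Set.Ioo (gapEnd t i.castSucc) (gapEnd t i.succ)) ∧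
      Bpair M s (stepFun M s f) v = ∑ i, ∑ k ∈ Finset.Ico (A i) (B i),
        inner ℂ (stepFun M s f (σ (k + 1)) - stepFun M s f (σ k)) (v (σ (k + 1))) := by
  obtain ⟨σ, hσ, hσs⟩ := exists_strictMono_nat_succ_eq hs
  have hW₀ : stepFun M s f (σ 0) = 0 :=
    stepFun_apply_of_lt hs.monotone f ((hσ Nat.zero_lt_one).trans_eq (by simpa using hσs 0))
  have hmono : Monotone fun k => (σ (k + 1) : EReal) := fun k k' h =>
    EReal.coe_le_coe_iff.2 (hσ.monotone (Nat.succ_le_succ h))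
  choose A B hbin using fun i : Fin (N + 2) => exists_filter_range_eq_Ico hmono
    (Set.ordConnected_Ioo (a := gapEnd t i.castSucc) (b := gapEnd t i.succ)) (M + 1)
  refine ⟨σ, hσ, A, B, fun i k hk => ?_, ?_⟩
  · rw [← hbin i] at hk
    exact (Finset.mem_filter.1 hk).2
  rw [Bpair_eq_sum_range σ hσs hW₀ v, sum_eq_sum_gap ht _ (fun k => σ (k + 1)) _
    fun k _ j h => by simp [h, hv]]
  simp only [hbin]

lemma enorm_Bpair_sub_stepFun_le {p : ℝ} (hpq : p.HolderConjugate q) (ht : StrictMono t)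
    (hrc : ∀ s : ℝ, ContinuousWithinAt u (Set.Ici s) s)
    (hlim : Filter.Tendsto u Filter.atBot (nhds 0)) {M : ℕ} {s : Fin (M + 1) → ℝ}
    (hs : StrictMono s) {f : Fin (M + 1) → Hsp n} (hf : pVar q (stepFun M s f) ≤ 1)
    {δ : ℝ≥0∞} (hδ : 0 < δ) :
    ‖Bpair M s (stepFun M s f) (u - stepFun N t fun j => u (t j))‖ₑ ≤
      2 ^ (1 / q) * (∑ i : Fin (N + 2),
        UdisNormLoc q (gapEnd t i.castSucc) (gapEnd t i.succ) u ^ p) ^ (1 / p) + (N + 2) * δ := by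
  have hq := hpq.symm.pos
  obtain ⟨σ, hσ, A, B, hmem, hB⟩ := exists_Bpair_eq_sum_gap ht hs f
    (v := u - stepFun N t fun j => u (t j)) fun j => by simp [stepFun_apply_self ht]
  rw [hB]
  set W := stepFun M s f
  set S := Finset.univ.filter fun i => A i < B i
  have hB_le_A : ∀ i ∈ S, ∀ i' ∈ S, i < i' → B i ≤ A i' := fun i hi i' hi' hii' => by
    have hi := (Finset.mem_filter.1 hi).2
    have h₁ := hmem i (B i - 1) (Finset.mem_Ico.2 ⟨by omega, by omega⟩)
    have h₂ := hmem i' (A i') (Finset.mem_Ico.2 ⟨le_rfl, (Finset.mem_filter.1 hi').2⟩)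
    have := hσ.lt_iff_lt.1 (lt_of_mem_gap ht hii' h₁ h₂)
    omega
  have hV : ∑ i ∈ S, variationOn q W (Set.Icc (σ (A i)) (σ (B i))) ≤ 1 := by
    refine (sum_variationOn_le_biUnion S _ fun i hi i' hi' hii' x hx y hy => ?_).trans
      (variationOn_le_one hq hf _)
    exact hx.2.trans ((hσ.monotone (hB_le_A i hi i' hi' hii')).trans hy.1)
  refine (enorm_sum_le _ _).trans ?_
  rw [← Finset.sum_subset (Finset.subset_univ S) fun i _ hi => by
    simp [Finset.Ico_eq_empty_of_le (not_lt.1 (by simpa [S] using hi))]]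
  refine (sum_le_two_rpow_mul_add S hpq (fun i hi => enorm_sum_gap_le hq hrc hlim ht.monotone hσ
    hf i (Finset.mem_filter.1 hi).2 (hmem i) hδ) hV).trans ?_
  have hS : S.card ≤ N + 2 := (Finset.card_le_univ S).trans_eq (Fintype.card_fin _)
  gcongr
  · exact one_div_nonneg.2 hpq.nonneg
  · exact Finset.subset_univ S
  · exact_mod_cast hS

theorem UdisNorm_sub_stepFun_le {p : ℝ} (hpq : p.HolderConjugate q) (ht : StrictMono t)
    (hrc : ∀ s : ℝ, ContinuousWithinAt u (Set.Ici s) s)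
    (hlim : Filter.Tendsto u Filter.atBot (nhds 0)) :
    UdisNorm q (u - stepFun N t fun j => u (t j)) ≤
      2 ^ (1 / q) * (∑ i : Fin (N + 2),
        UdisNormLoc q (gapEnd t i.castSucc) (gapEnd t i.succ) u ^ p) ^ (1 / p) := by
  refine iSup_le fun M => iSup_le fun s => iSup_le fun hs => iSup_le fun f => iSup_le fun hf => ?_
  refine ENNReal.le_of_forall_pos_le_add fun ε hε _ => ?_
  have hN : ((N : ℝ≥0∞) + 2) ≠ 0 := by positivity
  have hN' : ((N : ℝ≥0∞) + 2) ≠ ⊤ := by finiteness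
  have hδ : 0 < (ε : ℝ≥0∞) / (N + 2) := ENNReal.div_pos (ENNReal.coe_ne_zero.2 hε.ne') hN'
  have := enorm_Bpair_sub_stepFun_le hpq ht hrc hlim hs hf hδ
  rwa [ENNReal.mul_div_cancel hN hN'] at this

end Main

end DP

theorem stmt13_general (n : ℕ) (p q : ℝ) (hp : 1 < p) (hpq : 1 / p + 1 / q = 1)
    (N : ℕ) (t : Fin (N + 1) → ℝ) (ht : StrictMono t) (u : ℝ → Hsp n)
    (hrc : ∀ s : ℝ, ContinuousWithinAt u (Set.Ici s) s)
    (hlim : Filter.Tendsto u Filter.atBot (nhds 0)) :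
    DP.UdisNorm q (u - DP.stepFun N t fun j => u (t j)) ≤
      4 * ((DP.UdisNormLoc q ⊥ ((t 0 : ℝ) : EReal) u ^ p
          + ∑ j : Fin N,
              DP.UdisNormLoc q ((t j.castSucc : ℝ) : EReal) ((t j.succ : ℝ) : EReal) u ^ p)
          + DP.UdisNormLoc q ((t (Fin.last N) : ℝ) : EReal) ⊤ u ^ p) ^ (1 / p) := by
  have hpq' : p.HolderConjugate q :=
    Real.holderConjugate_iff.2 ⟨hp, by simpa only [one_div] using hpq⟩
  rw [DP.sum_gapEnd fun a b => DP.UdisNormLoc q a b u ^ p]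
  refine (DP.UdisNorm_sub_stepFun_le hpq' ht hrc hlim).trans ?_
  gcongr
  calc (2 : ℝ≥0∞) ^ (1 / q) ≤ 2 ^ (1 : ℝ) := ENNReal.rpow_le_rpow_of_exponent_le one_le_two
        ((div_le_one hpq'.symm.pos).2 hpq'.symm.lt.le)
    _ ≤ 4 := by norm_num

/-- (Local-to-global bound for the discrete weak `U^p` norm.) Let `1 < p < ∞`,
`1/p + 1/q = 1`, and let `(t_j)` be a finite increasing sequence. If `u ∈ L^∞_t L^2_x` is right
continuous with `u(t) → 0` as `t → -∞`, and `u_τ` is the associated step function, then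
`‖u - u_τ‖_{Ũ^p_{dis}} ≤ 4 (∑_j ‖u‖_{Ũ^p_{dis}(t_j, t_{j+1})}^p)^{1/p}` (with `t₋ = -∞`,
`t₊ = ∞` for the outer gaps). -/
theorem stmt13 (n : ℕ) (p q : ℝ) (hp : 1 < p) (hq : 1 < q) (hpq : 1 / p + 1 / q = 1)
    (N : ℕ) (t : Fin (N + 1) → ℝ) (ht : StrictMono t) (u : ℝ → Hsp n)
    (hbdd : ∃ K : ℝ, ∀ s : ℝ, ‖u s‖ ≤ K)
    (hrc : ∀ s : ℝ, ContinuousWithinAt u (Set.Ici s) s)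
    (hlim : Filter.Tendsto u Filter.atBot (nhds 0)) :
    DP.UdisNorm q (u - DP.stepFun N t fun j => u (t j)) ≤
      4 * ((DP.UdisNormLoc q ⊥ ((t 0 : ℝ) : EReal) u ^ p
          + ∑ j : Fin N,
              DP.UdisNormLoc q ((t j.castSucc : ℝ) : EReal) ((t j.succ : ℝ) : EReal) u ^ p)
          + DP.UdisNormLoc q ((t (Fin.last N) : ℝ) : EReal) ⊤ u ^ p) ^ (1 / p) :=
  stmt13_general n p q hp hpq N t ht u hrc hlim
end
end
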